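/- Let G = (V, E⁺, E⁰) be a fuzzy graph with weight function ω and let k be a nonnegative integer. If u and v are two distinct vertices with |N⁺(u) ∩ N⁺(v)| > k, then in every clustering of G of cost at most k, the vertices u and v lie in the same cluster. -/

import Mathlib

open Finset

/-- A fuzzy graph: a finite vertex set with disjoint symmetric irreflexive sets of
'real' edges and 'fuzzy' edges; remaining pairs of distinct vertices are 'nonedges'. -/
structure FuzzyGraph (V : Type*) where
  real : V → V → Bool
  fuzzy : V → V → Bool
  real_symm : ∀ u v, real u v = real v u
  fuzzy_symm : ∀ u v, fuzzy u v = fuzzy v u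
  real_irrefl : ∀ v, real v v = false
  fuzzy_irrefl : ∀ v, fuzzy v v = false
  not_real_and_fuzzy : ∀ u v, ¬(real u v = true ∧ fuzzy u v = true)

namespace FuzzyGraph

variable {V : Type*}

/-- The pair `{u,v}` is a nonedge: distinct, neither a real nor a fuzzy edge. -/
def nonedge (G : FuzzyGraph V) (u v : V) : Prop :=
  u ≠ v ∧ ¬G.real u v ∧ ¬G.fuzzy u v

instance (G : FuzzyGraph V) [DecidableEq V] (u v : V) : Decidable (G.nonedge u v) :=
  inferInstanceAs (Decidable (u ≠ v ∧ ¬G.real u v ∧ ¬G.fuzzy u v))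

/-- The simple graph `G⁽⁺⁾` of real edges. -/
def plus (G : FuzzyGraph V) : SimpleGraph V where
  Adj u v := G.real u v
  symm := by refine ⟨?_⟩; intro u v h; rwa [G.real_symm] at h
  loopless := by refine ⟨?_⟩; intro v h; rw [G.real_irrefl] at h; exact Bool.noConfusion h

/-- The simple graph `G⁽⁰⁾` of fuzzy edges. -/
def zero (G : FuzzyGraph V) : SimpleGraph V where
  Adj u v := G.fuzzy u v
  symm := by refine ⟨?_⟩; intro u v h; rwa [G.fuzzy_symm] at h
  loopless := by refine ⟨?_⟩; intro v h; rw [G.fuzzy_irrefl] at h; exact Bool.noConfusion h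

variable [Fintype V] [DecidableEq V]

/-- The real neighborhood `N⁺(v)`. -/
def realNbrs (G : FuzzyGraph V) (v : V) : Finset V := univ.filter fun u => G.real v u

/-- The fuzzy neighborhood `N⁰(v)`. -/
def fuzzyNbrs (G : FuzzyGraph V) (v : V) : Finset V := univ.filter fun u => G.fuzzy v u

/-- The nonneighborhood `N⁻(v)`. -/
def nonNbrs (G : FuzzyGraph V) (v : V) : Finset V := univ.filter fun u => G.nonedge v u

/-- The closed real neighborhood `N⁺[v]`. -/
def closedRealNbrs (G : FuzzyGraph V) (v : V) : Finset V := insert v (G.realNbrs v)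

end FuzzyGraph

/-- `ω` is a valid weight function for `G`: symmetric nonnegative integer weights,
zero exactly on the fuzzy edges. -/
def IsWeight {V : Type*} [Fintype V] [DecidableEq V] (G : FuzzyGraph V) (ω : V → V → ℕ) : Prop :=
  (∀ u v, ω u v = ω v u) ∧ ∀ u v : V, u ≠ v → (ω u v = 0 ↔ G.fuzzy u v)

/-- The unit weight function: weight 1 on real edges and nonedges, 0 on fuzzy edges. -/
def unitW {V : Type*} (G : FuzzyGraph V) : V → V → ℕ := fun u v => if G.fuzzy u v then 0 else 1

/-- Two vertices lie in a common cluster of the clustering `𝒞`. -/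
def together {V : Type*} [Fintype V] [DecidableEq V] (𝒞 : Finpartition (univ : Finset V))
    (u v : V) : Prop :=
  ∃ C ∈ 𝒞.parts, u ∈ C ∧ v ∈ C

instance {V : Type*} [Fintype V] [DecidableEq V] (𝒞 : Finpartition (univ : Finset V)) (u v : V) :
    Decidable (together 𝒞 u v) :=
  inferInstanceAs (Decidable (∃ C ∈ 𝒞.parts, u ∈ C ∧ v ∈ C))

/-- The cost of a clustering: total weight of real edges between different clusters
plus total weight of nonedges inside clusters.  (Each unordered pair is counted twice
in the sum over ordered pairs, whence the division by 2.) -/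
def cost {V : Type*} [Fintype V] [DecidableEq V] (G : FuzzyGraph V) (ω : V → V → ℕ)
    (𝒞 : Finpartition (univ : Finset V)) : ℕ :=
  (∑ p ∈ univ.offDiag,
      ((if G.real p.1 p.2 ∧ ¬together 𝒞 p.1 p.2 then ω p.1 p.2 else 0) +
       (if G.nonedge p.1 p.2 ∧ together 𝒞 p.1 p.2 then ω p.1 p.2 else 0))) / 2

/-- A clique in `G⁽⁺⁾`: pairwise real-adjacent vertices. -/
def IsRealClique {V : Type*} (G : FuzzyGraph V) (K : Finset V) : Prop :=
  ∀ u ∈ K, ∀ v ∈ K, u ≠ v → G.real u v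

/-- A clique in `G⁽⁰⁾`: pairwise fuzzy-adjacent vertices. -/
def IsFuzzyClique {V : Type*} (G : FuzzyGraph V) (K : Finset V) : Prop :=
  ∀ u ∈ K, ∀ v ∈ K, u ≠ v → G.fuzzy u v

/-- A critical clique of `G⁽⁺⁾`: a clique with `⋂_{x ∈ K} N⁺[x] = ⋃_{x ∈ K} N⁺[x]`,
inclusion-wise maximal with this property. -/
def IsCriticalClique {V : Type*} [Fintype V] [DecidableEq V] (G : FuzzyGraph V)
    (K : Finset V) : Prop :=
  IsRealClique G K ∧ K.inf (G.closedRealNbrs) = K.sup (G.closedRealNbrs) ∧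
    ∀ K' : Finset V, K ⊆ K' → IsRealClique G K' →
      K'.inf (G.closedRealNbrs) = K'.sup (G.closedRealNbrs) → K' = K

/-- A simple graph is `c`-closed if every pair of distinct nonadjacent vertices has
fewer than `c` common neighbors. -/
def IsCClosed {V : Type*} (H : SimpleGraph V) (c : ℕ) : Prop :=
  ∀ u v : V, u ≠ v → ¬H.Adj u v → Set.ncard {w | H.Adj u w ∧ H.Adj v w} < c

/-- A fuzzy graph is fuzzy `c`-closed if its fuzzy edge graph `G⁽⁰⁾` is `c`-closed. -/
def FuzzyCClosed {V : Type*} [Fintype V] [DecidableEq V] (G : FuzzyGraph V) (c : ℕ) : Prop :=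
  ∀ u v : V, u ≠ v → ¬G.fuzzy u v → ((G.fuzzyNbrs u) ∩ (G.fuzzyNbrs v)).card < c

/-! If `u` and `v` are in different clusters, no common real neighbour `w` can share a cluster
with both, so one of the real edges `uw`, `vw` is cut. These cut edges are distinct for distinct
`w`, and each has positive weight, so the cost is at least `|N⁺(u) ∩ N⁺(v)|`. -/

namespace FuzzyGraph

variable {V : Type*} (G : FuzzyGraph V) {u v w : V}

theorem nonedge_comm : G.nonedge u v ↔ G.nonedge v u := by
  simp only [nonedge, ne_comm, G.real_symm u v, G.fuzzy_symm u v]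

theorem mem_realNbrs [Fintype V] [DecidableEq V] : w ∈ G.realNbrs v ↔ G.real v w := by
  simp [realNbrs]

end FuzzyGraph

section Clustering

variable {V : Type*} [Fintype V] [DecidableEq V] {𝒞 : Finpartition (univ : Finset V)} {a b : V}

theorem together_iff_part_eq : together 𝒞 a b ↔ 𝒞.part a = 𝒞.part b :=
  Iff.trans (Finpartition.mem_part_iff_exists (P := 𝒞)).symm
    (𝒞.mem_part_iff_part_eq_part (mem_univ a) (mem_univ b))

theorem together_comm : together 𝒞 a b ↔ together 𝒞 b a := by
  simp only [together_iff_part_eq, eq_comm]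

theorem ne_of_not_together (h : ¬together 𝒞 a b) : a ≠ b := by
  rintro rfl
  exact h (together_iff_part_eq.2 rfl)

theorem not_together_or_not_together (h : ¬together 𝒞 a b) (c : V) :
    ¬together 𝒞 a c ∨ ¬together 𝒞 b c := by
  simp only [together_iff_part_eq] at h ⊢
  by_contra! hc
  exact h (hc.1.trans hc.2.symm)

end Clustering

section Cost

variable {V : Type*} [Fintype V] [DecidableEq V] {G : FuzzyGraph V} {ω : V → V → ℕ}
  {𝒞 : Finpartition (univ : Finset V)} {a b u v w : V}

def pairCost (G : FuzzyGraph V) (ω : V → V → ℕ) (𝒞 : Finpartition (univ : Finset V))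
    (a b : V) : ℕ :=
  (if G.real a b ∧ ¬together 𝒞 a b then ω a b else 0) +
    (if G.nonedge a b ∧ together 𝒞 a b then ω a b else 0)

theorem cost_eq_sum_pairCost :
    cost G ω 𝒞 = (∑ p ∈ univ.offDiag, pairCost G ω 𝒞 p.1 p.2) / 2 :=
  rfl

theorem IsWeight.pos_of_real (hω : IsWeight G ω) (h : G.real a b) : 0 < ω a b :=
  Nat.pos_of_ne_zero fun h0 =>
    G.not_real_and_fuzzy a b ⟨h, (hω.2 a b (G.plus.ne_of_adj h)).1 h0⟩

theorem IsWeight.pairCost_comm (hω : IsWeight G ω) :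
    pairCost G ω 𝒞 a b = pairCost G ω 𝒞 b a := by
  simp only [pairCost, hω.1 a b, G.real_symm a b, G.nonedge_comm, together_comm]

theorem IsWeight.one_le_pairCost (hω : IsWeight G ω) (h : G.real a b)
    (hsep : ¬together 𝒞 a b) : 1 ≤ pairCost G ω 𝒞 a b := by
  rw [pairCost, if_pos ⟨h, hsep⟩]
  exact le_add_right (hω.pos_of_real h)

theorem IsWeight.one_le_pairCost_add_pairCost (hω : IsWeight G ω) (huv : ¬together 𝒞 u v)
    (hu : G.real u w) (hv : G.real v w) : 1 ≤ pairCost G ω 𝒞 u w + pairCost G ω 𝒞 v w := by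
  rcases not_together_or_not_together huv w with hsep | hsep
  · exact le_add_right (hω.one_le_pairCost hu hsep)
  · exact le_add_left (hω.one_le_pairCost hv hsep)

theorem IsWeight.card_commonRealNbrs_le_cost (hω : IsWeight G ω) (huv : ¬together 𝒞 u v) :
    (G.realNbrs u ∩ G.realNbrs v).card ≤ cost G ω 𝒞 := by
  set S := G.realNbrs u ∩ G.realNbrs v
  set F : V × V → ℕ := fun p => pairCost G ω 𝒞 p.1 p.2
  have hS : ∀ w ∈ S, G.real u w ∧ G.real v w := fun w hw => by
    simpa only [S, mem_inter, G.mem_realNbrs] using hw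
  have hdisj : Disjoint ({u, v} : Finset V) S := by
    simp only [disjoint_insert_left, disjoint_singleton_left]
    exact ⟨fun hu => by simpa [G.real_irrefl] using (hS u hu).1,
      fun hv => by simpa [G.real_irrefl] using (hS v hv).2⟩
  have hout : S.card ≤ ∑ p ∈ ({u, v} : Finset V) ×ˢ S, F p := by
    rw [sum_product, sum_pair (ne_of_not_together huv), ← sum_add_distrib, card_eq_sum_ones]
    exact sum_le_sum fun w hw => hω.one_le_pairCost_add_pairCost huv (hS w hw).1 (hS w hw).2
  have hin : ∑ p ∈ S ×ˢ ({u, v} : Finset V), F p = ∑ p ∈ ({u, v} : Finset V) ×ˢ S, F p := by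
    rw [sum_product_right, sum_product]
    exact sum_congr rfl fun _ _ => sum_congr rfl fun _ _ => hω.pairCost_comm
  have hsub : ({u, v} ×ˢ S) ∪ (S ×ˢ {u, v}) ⊆ univ.offDiag := by
    intro p hp
    simp only [mem_union, mem_product] at hp
    rw [mem_offDiag]
    refine ⟨mem_univ _, mem_univ _, ?_⟩
    rcases hp with ⟨h1, h2⟩ | ⟨h1, h2⟩
    · exact (disjoint_coe.2 hdisj).ne_of_mem h1 h2
    · exact ((disjoint_coe.2 hdisj).ne_of_mem h2 h1).symm
  rw [cost_eq_sum_pairCost, Nat.le_div_iff_mul_le two_pos]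
  calc S.card * 2 ≤ ∑ p ∈ {u, v} ×ˢ S, F p + ∑ p ∈ S ×ˢ {u, v}, F p := by rw [hin]; omega
    _ = ∑ p ∈ ({u, v} ×ˢ S) ∪ (S ×ˢ {u, v}), F p :=
        (sum_union (disjoint_product.2 (Or.inl hdisj))).symm
    _ ≤ ∑ p ∈ univ.offDiag, F p := sum_le_sum_of_subset hsub

end Cost

theorem stmt0_general {V : Type*} [Fintype V] [DecidableEq V]
    (G : FuzzyGraph V) (ω : V → V → ℕ) (hω : IsWeight G ω) (k : ℕ)
    (u v : V)
    (hcommon : k < ((G.realNbrs u) ∩ (G.realNbrs v)).card)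
    (𝒞 : Finpartition (Finset.univ : Finset V)) (hcost : cost G ω 𝒞 ≤ k) :
    together 𝒞 u v := by
  by_contra hsep
  have := hω.card_commonRealNbrs_le_cost hsep
  omega

/-- If `|N⁺(u) ∩ N⁺(v)| > k` then in every clustering of cost at most `k`,
the vertices `u` and `v` lie in the same cluster. -/
theorem stmt0 {V : Type*} [Fintype V] [DecidableEq V]
    (G : FuzzyGraph V) (ω : V → V → ℕ) (hω : IsWeight G ω) (k : ℕ)
    (u v : V) (huv : u ≠ v)
    (hcommon : k < ((G.realNbrs u) ∩ (G.realNbrs v)).card)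
    (𝒞 : Finpartition (Finset.univ : Finset V)) (hcost : cost G ω 𝒞 ≤ k) :
    together 𝒞 u v :=
  stmt0_general G ω hω k u v hcommon 𝒞 hcost
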